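/- In a ring R where every proper ideal is semiprime, any finite product of prime ideals equals their intersection: for prime ideals P₁, …, Pₙ of R, P₁⋯Pₙ = P₁ ∩ ⋯ ∩ Pₙ. -/
import Mathlib


open Pointwise

/-- The product of two two-sided ideals. -/
def TwoSidedIdeal.prod {R : Type*} [Ring R] (I J : TwoSidedIdeal R) : TwoSidedIdeal R :=
  TwoSidedIdeal.span ((I : Set R) * (J : Set R))

/-- A proper two-sided ideal `P` is prime if `A * B ⊆ P` implies `A ⊆ P` or `B ⊆ P`. -/
def TwoSidedIdeal.IsPrimeIdeal {R : Type*} [Ring R] (P : TwoSidedIdeal R) : Prop :=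
  P ≠ ⊤ ∧ ∀ A B : TwoSidedIdeal R, TwoSidedIdeal.prod A B ≤ P → A ≤ P ∨ B ≤ P

/-- A proper two-sided ideal `I` is semiprime if `J ^ 2 ⊆ I` implies `J ⊆ I`. -/
def TwoSidedIdeal.IsSemiprimeIdeal {R : Type*} [Ring R] (I : TwoSidedIdeal R) : Prop :=
  I ≠ ⊤ ∧ ∀ J : TwoSidedIdeal R, TwoSidedIdeal.prod J J ≤ I → J ≤ I

/-- The product of a finite list of two-sided ideals (the empty product is `⊤`). -/
def TwoSidedIdeal.listProd {R : Type*} [Ring R] : List (TwoSidedIdeal R) → TwoSidedIdeal R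
  | [] => ⊤
  | P :: l => TwoSidedIdeal.prod P (TwoSidedIdeal.listProd l)

lemma TwoSidedIdeal.span_le' {R : Type*} [Ring R] {s : Set R} {I : TwoSidedIdeal R}
    (h : s ⊆ (I : Set R)) : TwoSidedIdeal.span s ≤ I := fun x hx =>
  TwoSidedIdeal.mem_span_iff.mp hx I h

lemma TwoSidedIdeal.prod_le_inf {R : Type*} [Ring R] (I J : TwoSidedIdeal R) :
    TwoSidedIdeal.prod I J ≤ I ⊓ J := by
  apply TwoSidedIdeal.span_le'
  rintro x ⟨a, ha, b, hb, rfl⟩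
  exact ⟨I.mul_mem_right a b ha, J.mul_mem_left a b hb⟩

lemma TwoSidedIdeal.prod_eq_inf {R : Type*} [Ring R]
    (hsemi : ∀ I : TwoSidedIdeal R, I ≠ ⊤ → I.IsSemiprimeIdeal)
    (I J : TwoSidedIdeal R) : TwoSidedIdeal.prod I J = I ⊓ J := by
  refine le_antisymm (prod_le_inf I J) ?_
  by_cases htop : TwoSidedIdeal.prod I J = ⊤
  · rw [htop]; exact le_top
  · refine (hsemi _ htop).2 (I ⊓ J) ?_
    apply TwoSidedIdeal.span_le'
    refine (Set.mul_subset_mul ?_ ?_).trans TwoSidedIdeal.subset_span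
    · exact fun x hx => hx.1
    · exact fun x hx => hx.2

/-- In a ring in which every proper ideal is semiprime (and every semiprime ideal is an
intersection of prime ideals), any finite product of prime ideals equals their
intersection. -/
theorem prod_primes_eq_inf_of_all_semiprime {R : Type*} [Ring R]
    (hsemi : ∀ I : TwoSidedIdeal R, I ≠ ⊤ → I.IsSemiprimeIdeal)
    (hint : ∀ I : TwoSidedIdeal R, I.IsSemiprimeIdeal →
      ∃ S : Set (TwoSidedIdeal R), S.Nonempty ∧ (∀ Q ∈ S, Q.IsPrimeIdeal) ∧ I = sInf S)
    (l : List (TwoSidedIdeal R)) (hl : ∀ P ∈ l, P.IsPrimeIdeal) :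
    TwoSidedIdeal.listProd l = l.foldr (· ⊓ ·) ⊤ := by
  induction l with
  | nil => rfl
  | cons P l ih =>
    simp only [TwoSidedIdeal.listProd, List.foldr_cons,
      ih (fun Q hQ => hl Q (List.mem_cons_of_mem P hQ))] at *
    exact TwoSidedIdeal.prod_eq_inf hsemi _ _
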